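/- arXiv:2311.00711 — 2 statements merged into one kernel-verified Lean document; each statement's English description precedes it below -/
import Mathlib

section
/- The weak Lebesgue space L^{3,∞}(ℝ³) embeds into the critical Morrey space Ṁ^{2,3}: there exists a constant C > 0 such that for every measurable f : ℝ³ → ℝ³, sup_{x∈ℝ³} sup_{R>0} (R^{-1} ∫_{B(x,R)} |f(y)|² dy)^{1/2} ≤ C · sup_{α>0} α · μ({x ∈ ℝ³ : |f(x)| > α})^{1/3}. -/
open MeasureTheory ENNReal

private lemma morrey_aux
    (f : EuclideanSpace ℝ (Fin 3) → EuclideanSpace ℝ (Fin 3)) (hf : Measurable f)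
    (M : ℝ≥0∞)
    (hM : ∀ α : ℝ, 0 < α →
      ENNReal.ofReal α * (volume {x : EuclideanSpace ℝ (Fin 3) | α < ‖f x‖}) ^ (1/3 : ℝ) ≤ M)
    (hM0 : M ≠ 0) (hMt : M ≠ ⊤) (x : EuclideanSpace ℝ (Fin 3)) (R : ℝ) (hR : 0 < R) :
    ENNReal.ofReal R⁻¹ * ∫⁻ y in Metric.ball x R, (‖f y‖₊ : ℝ≥0∞) ^ (2 : ℕ)
      ≤ (ENNReal.ofReal 2 * (volume (Metric.ball (0 : EuclideanSpace ℝ (Fin 3)) 1) + 1))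
          * M ^ (2 : ℕ) := by
  set V1 : ℝ≥0∞ := volume (Metric.ball (0 : EuclideanSpace ℝ (Fin 3)) 1) with hV1
  set Mr : ℝ := M.toReal with hMr
  have hMrpos : 0 < Mr := ENNReal.toReal_pos hM0 hMt
  have hMM : ENNReal.ofReal Mr = M := ENNReal.ofReal_toReal hMt
  set a : ℝ := Mr / R with ha
  have hapos : 0 < a := div_pos hMrpos hR
  set μ' : Measure (EuclideanSpace ℝ (Fin 3)) := volume.restrict (Metric.ball x R) with hμ'
  -- rewrite integrand
  have h1 : ∀ y, (‖f y‖₊ : ℝ≥0∞) ^ (2 : ℕ) = ENNReal.ofReal (‖f y‖ ^ (2 : ℝ)) := by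
    intro y
    rw [show (‖f y‖ ^ (2:ℝ)) = ‖f y‖ ^ (2:ℕ) by
        rw [← Real.rpow_natCast]; norm_num,
      ENNReal.ofReal_pow (norm_nonneg _), ofReal_norm, enorm_eq_nnnorm]
  have hlayer :
      ∫⁻ y in Metric.ball x R, (‖f y‖₊ : ℝ≥0∞) ^ (2 : ℕ)
        = ENNReal.ofReal 2 *
            ∫⁻ t in Set.Ioi (0:ℝ), μ' {y | t < ‖f y‖} * ENNReal.ofReal t := by
    simp_rw [h1]
    have h2 : ENNReal.ofReal (2:ℝ) = 2 := by norm_num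
    have hkey := lintegral_rpow_eq_lintegral_meas_lt_mul μ'
      (f := fun y => ‖f y‖) (Filter.Eventually.of_forall fun y => norm_nonneg _)
      hf.norm.aemeasurable (p := 2) (by norm_num)
    simp only [show (2:ℝ) - 1 = 1 by norm_num, Real.rpow_one] at hkey
    exact hkey
  -- volume of the ball
  have hball : volume (Metric.ball x R) = ENNReal.ofReal (R ^ 3) * V1 := by
    rw [Measure.addHaar_ball (volume : Measure (EuclideanSpace ℝ (Fin 3))) x hR.le,
      finrank_euclideanSpace_fin]
  -- tail bound
  have htail : ∀ t : ℝ, 0 < t →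
      volume {y : EuclideanSpace ℝ (Fin 3) | t < ‖f y‖} ≤ (M / ENNReal.ofReal t) ^ (3:ℕ) := by
    intro t ht
    set v := volume {y : EuclideanSpace ℝ (Fin 3) | t < ‖f y‖} with hv
    have h0 : ENNReal.ofReal t ≠ 0 := by
      simp [ENNReal.ofReal_eq_zero, not_le, ht]
    have h2 : v ^ (1/3:ℝ) ≤ M / ENNReal.ofReal t := by
      rw [ENNReal.le_div_iff_mul_le (Or.inl h0) (Or.inl ENNReal.ofReal_ne_top)]
      rw [mul_comm]; exact hM t ht
    calc v = (v ^ (1/3:ℝ)) ^ (3:ℕ) := by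
            rw [← ENNReal.rpow_natCast (v ^ (1/3:ℝ)) 3, ← ENNReal.rpow_mul]
            norm_num
      _ ≤ (M / ENNReal.ofReal t) ^ (3:ℕ) := by gcongr
  -- split the integral
  have hsplit :
      ∫⁻ t in Set.Ioi (0:ℝ), μ' {y | t < ‖f y‖} * ENNReal.ofReal t
        = (∫⁻ t in Set.Ioc (0:ℝ) a, μ' {y | t < ‖f y‖} * ENNReal.ofReal t)
          + ∫⁻ t in Set.Ioi a, μ' {y | t < ‖f y‖} * ENNReal.ofReal t := by
    rw [← Set.Ioc_union_Ioi_eq_Ioi hapos.le,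
      lintegral_union measurableSet_Ioi (Set.Ioc_disjoint_Ioi le_rfl)]
  -- first piece
  have hp1 : ∫⁻ t in Set.Ioc (0:ℝ) a, μ' {y | t < ‖f y‖} * ENNReal.ofReal t
      ≤ ENNReal.ofReal (R ^ 3) * V1 * (ENNReal.ofReal a * ENNReal.ofReal a) := by
    have step : ∫⁻ t in Set.Ioc (0:ℝ) a, μ' {y | t < ‖f y‖} * ENNReal.ofReal t
        ≤ ∫⁻ _ in Set.Ioc (0:ℝ) a, ENNReal.ofReal (R ^ 3) * V1 * ENNReal.ofReal a := by
      refine setLIntegral_mono' measurableSet_Ioc fun t ht => ?_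
      have hμle : μ' {y | t < ‖f y‖} ≤ ENNReal.ofReal (R ^ 3) * V1 := by
        rw [← hball]
        calc μ' {y | t < ‖f y‖} ≤ μ' Set.univ := measure_mono (Set.subset_univ _)
          _ = volume (Metric.ball x R) := by rw [hμ', Measure.restrict_apply_univ]
      exact mul_le_mul' hμle (ENNReal.ofReal_le_ofReal ht.2)
    calc _ ≤ _ := step
      _ = ENNReal.ofReal (R ^ 3) * V1 * ENNReal.ofReal a * volume (Set.Ioc (0:ℝ) a) := by
          rw [setLIntegral_const]
      _ = ENNReal.ofReal (R ^ 3) * V1 * (ENNReal.ofReal a * ENNReal.ofReal a) := by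
          rw [Real.volume_Ioc, sub_zero]; ring
  -- second piece
  have hp2 : ∫⁻ t in Set.Ioi a, μ' {y | t < ‖f y‖} * ENNReal.ofReal t
      ≤ M ^ (3:ℕ) * ENNReal.ofReal a⁻¹ := by
    have step : ∫⁻ t in Set.Ioi a, μ' {y | t < ‖f y‖} * ENNReal.ofReal t
        ≤ ∫⁻ t in Set.Ioi a, M ^ (3:ℕ) * ENNReal.ofReal (t ^ (-2:ℝ)) := by
      refine setLIntegral_mono' measurableSet_Ioi fun t ht => ?_
      have ht0 : 0 < t := hapos.trans ht
      have hμle : μ' {y | t < ‖f y‖} ≤ (M / ENNReal.ofReal t) ^ (3:ℕ) := by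
        refine le_trans ?_ (htail t ht0)
        exact Measure.restrict_apply_le _ _
      have h0 : ENNReal.ofReal t ≠ 0 := by
        simp [ENNReal.ofReal_eq_zero, not_le, ht0]
      calc μ' {y | t < ‖f y‖} * ENNReal.ofReal t
          ≤ (M / ENNReal.ofReal t) ^ (3:ℕ) * ENNReal.ofReal t := by gcongr
        _ = M ^ (3:ℕ) * (((ENNReal.ofReal t) ^ (3:ℕ))⁻¹ * ENNReal.ofReal t) := by
            rw [div_eq_mul_inv, mul_pow, ENNReal.inv_pow]; ring
        _ = M ^ (3:ℕ) * ENNReal.ofReal (t ^ (-2:ℝ)) := by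
            congr 1
            rw [← ENNReal.ofReal_pow ht0.le, ← ENNReal.ofReal_inv_of_pos (by positivity),
              ← ENNReal.ofReal_mul (by positivity)]
            congr 1
            rw [Real.rpow_neg ht0.le, Real.rpow_two]
            field_simp
    calc _ ≤ _ := step
      _ = M ^ (3:ℕ) * ∫⁻ t in Set.Ioi a, ENNReal.ofReal (t ^ (-2:ℝ)) := by
          rw [lintegral_const_mul' _ _ (ENNReal.pow_ne_top hMt)]
      _ = M ^ (3:ℕ) * ENNReal.ofReal a⁻¹ := by
          congr 1
          rw [← ofReal_integral_eq_lintegral_ofReal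
            (integrableOn_Ioi_rpow_of_lt (by norm_num) hapos)
            ((ae_restrict_mem measurableSet_Ioi).mono fun t ht =>
              Real.rpow_nonneg (hapos.trans ht).le _)]
          congr 1
          rw [integral_Ioi_rpow_of_lt (by norm_num) hapos]
          norm_num [Real.rpow_neg_one]
  -- combine
  have key1 : ENNReal.ofReal R⁻¹ *
      (ENNReal.ofReal (R ^ 3) * V1 * (ENNReal.ofReal a * ENNReal.ofReal a)) = V1 * M ^ (2:ℕ) := by
    have haR : ENNReal.ofReal a = M * ENNReal.ofReal R⁻¹ := by
      rw [ha, div_eq_mul_inv, ENNReal.ofReal_mul hMrpos.le, hMM]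
    rw [haR]
    have : ENNReal.ofReal R⁻¹ * ENNReal.ofReal (R ^ 3) * ENNReal.ofReal R⁻¹ *
        ENNReal.ofReal R⁻¹ = 1 := by
      rw [← ENNReal.ofReal_mul (by positivity), ← ENNReal.ofReal_mul (by positivity),
        ← ENNReal.ofReal_mul (by positivity)]
      rw [show R⁻¹ * R ^ 3 * R⁻¹ * R⁻¹ = 1 by field_simp]
      exact ENNReal.ofReal_one
    calc ENNReal.ofReal R⁻¹ *
        (ENNReal.ofReal (R ^ 3) * V1 * (M * ENNReal.ofReal R⁻¹ * (M * ENNReal.ofReal R⁻¹)))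
        = (ENNReal.ofReal R⁻¹ * ENNReal.ofReal (R ^ 3) * ENNReal.ofReal R⁻¹ *
            ENNReal.ofReal R⁻¹) * (V1 * M ^ (2:ℕ)) := by ring
      _ = V1 * M ^ (2:ℕ) := by rw [this, one_mul]
  have key2 : ENNReal.ofReal R⁻¹ * (M ^ (3:ℕ) * ENNReal.ofReal a⁻¹) = M ^ (2:ℕ) := by
    have haI : ENNReal.ofReal a⁻¹ = ENNReal.ofReal R * ENNReal.ofReal Mr⁻¹ := by
      rw [ha]
      rw [show (Mr / R)⁻¹ = R * Mr⁻¹ by field_simp]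
      rw [ENNReal.ofReal_mul hR.le]
    have hRR : ENNReal.ofReal R⁻¹ * ENNReal.ofReal R = 1 := by
      rw [← ENNReal.ofReal_mul (by positivity), inv_mul_cancel₀ hR.ne', ENNReal.ofReal_one]
    have hMMr : M * ENNReal.ofReal Mr⁻¹ = 1 := by
      rw [← hMM, ← ENNReal.ofReal_mul hMrpos.le, mul_inv_cancel₀ hMrpos.ne',
        ENNReal.ofReal_one]
    rw [haI]
    calc ENNReal.ofReal R⁻¹ * (M ^ (3:ℕ) * (ENNReal.ofReal R * ENNReal.ofReal Mr⁻¹))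
        = (ENNReal.ofReal R⁻¹ * ENNReal.ofReal R) * (M * ENNReal.ofReal Mr⁻¹) * M ^ (2:ℕ) := by
          ring
      _ = M ^ (2:ℕ) := by rw [hRR, hMMr, one_mul, one_mul]
    -- note: haI rewriting needed
  rw [hlayer, hsplit]
  calc ENNReal.ofReal R⁻¹ * (ENNReal.ofReal 2 * ((∫⁻ t in Set.Ioc (0:ℝ) a,
        μ' {y | t < ‖f y‖} * ENNReal.ofReal t)
        + ∫⁻ t in Set.Ioi a, μ' {y | t < ‖f y‖} * ENNReal.ofReal t))
      = ENNReal.ofReal 2 * (ENNReal.ofReal R⁻¹ * (∫⁻ t in Set.Ioc (0:ℝ) a,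
          μ' {y | t < ‖f y‖} * ENNReal.ofReal t)
        + ENNReal.ofReal R⁻¹ * ∫⁻ t in Set.Ioi a, μ' {y | t < ‖f y‖} * ENNReal.ofReal t) := by
        ring
    _ ≤ ENNReal.ofReal 2 * (V1 * M ^ (2:ℕ) + M ^ (2:ℕ)) := by
        refine mul_le_mul_right (add_le_add ?_ ?_) _
        · rw [← key1]; exact mul_le_mul_right hp1 _
        · rw [← key2]; exact mul_le_mul_right hp2 _
    _ = (ENNReal.ofReal 2 * (V1 + 1)) * M ^ (2:ℕ) := by ring

/-- The weak Lebesgue space `L^{3,∞}(ℝ³)` embeds into the critical Morrey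
space `Ṁ^{2,3}`: there is a constant `C > 0` with
`‖f‖_{Ṁ^{2,3}} ≤ C ‖f‖_{L^{3,∞}}` for every measurable `f`. -/
theorem weakL3_embeds_in_morrey :
    ∃ C : ℝ, 0 < C ∧
      ∀ f : EuclideanSpace ℝ (Fin 3) → EuclideanSpace ℝ (Fin 3), Measurable f →
        (⨆ (x : EuclideanSpace ℝ (Fin 3)), ⨆ (R : ℝ) (_ : 0 < R),
            (ENNReal.ofReal R⁻¹ *
              ∫⁻ y in Metric.ball x R, (‖f y‖₊ : ℝ≥0∞) ^ (2 : ℕ)) ^ (1/2 : ℝ))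
          ≤ ENNReal.ofReal C *
              ⨆ (α : ℝ) (_ : 0 < α), ENNReal.ofReal α *
                (volume {x : EuclideanSpace ℝ (Fin 3) | α < ‖f x‖}) ^ (1/3 : ℝ) := by
  set V1 : ℝ≥0∞ := volume (Metric.ball (0 : EuclideanSpace ℝ (Fin 3)) 1) with hV1
  have hV1t : V1 ≠ ⊤ := (measure_ball_lt_top).ne
  set K : ℝ≥0∞ := ENNReal.ofReal 2 * (V1 + 1) with hK
  have hKt : K ≠ ⊤ := by
    rw [hK]
    exact ENNReal.mul_ne_top ENNReal.ofReal_ne_top (by simp [hV1t])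
  refine ⟨K.toReal + 1, by positivity, fun f hf => ?_⟩
  set C : ℝ := K.toReal + 1 with hC
  have hC1 : (1:ℝ) ≤ C := by
    have : 0 ≤ K.toReal := ENNReal.toReal_nonneg
    rw [hC]; linarith
  set M : ℝ≥0∞ := ⨆ (α : ℝ) (_ : 0 < α), ENNReal.ofReal α *
      (volume {x : EuclideanSpace ℝ (Fin 3) | α < ‖f x‖}) ^ (1/3 : ℝ) with hM
  have hMle : ∀ α : ℝ, 0 < α →
      ENNReal.ofReal α * (volume {x : EuclideanSpace ℝ (Fin 3) | α < ‖f x‖}) ^ (1/3 : ℝ) ≤ M := by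
    intro α hα
    rw [hM]
    exact le_iSup₂ (f := fun (α : ℝ) (_ : 0 < α) => ENNReal.ofReal α *
      (volume {x : EuclideanSpace ℝ (Fin 3) | α < ‖f x‖}) ^ (1/3 : ℝ)) α hα
  rcases eq_or_ne M ⊤ with hMt | hMt
  · rw [hMt, ENNReal.mul_top]
    · exact le_top
    · simp [ENNReal.ofReal_eq_zero, not_le]; linarith
  rcases eq_or_ne M 0 with hM0 | hM0
  · -- f is a.e. zero
    have hnull : ∀ α : ℝ, 0 < α →
        volume {x : EuclideanSpace ℝ (Fin 3) | α < ‖f x‖} = 0 := by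
      intro α hα
      have := hMle α hα
      rw [hM0, le_zero_iff, mul_eq_zero] at this
      rcases this with h | h
      · exact absurd h (by simp [ENNReal.ofReal_eq_zero, not_le]; linarith)
      · rwa [ENNReal.rpow_eq_zero_iff_of_pos (by norm_num)] at h
    have hzero : volume {x : EuclideanSpace ℝ (Fin 3) | 0 < ‖f x‖} = 0 := by
      have hsub : {x : EuclideanSpace ℝ (Fin 3) | 0 < ‖f x‖} ⊆
          ⋃ n : ℕ, {x : EuclideanSpace ℝ (Fin 3) | 1/(n+1) < ‖f x‖} := by
        intro y hy
        obtain ⟨n, hn⟩ := exists_nat_one_div_lt (show (0:ℝ) < ‖f y‖ from hy)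
        exact Set.mem_iUnion.mpr ⟨n, hn⟩
      refine measure_mono_null hsub (measure_iUnion_null fun n => hnull _ (by positivity))
    have hae : ∀ᵐ y : EuclideanSpace ℝ (Fin 3), (‖f y‖₊ : ℝ≥0∞) ^ (2 : ℕ) = 0 := by
      have : ∀ᵐ y : EuclideanSpace ℝ (Fin 3), ¬ (0 < ‖f y‖) := by
        rw [ae_iff]; simpa using hzero
      filter_upwards [this] with y hy
      have : ‖f y‖ = 0 := le_antisymm (not_lt.mp hy) (norm_nonneg _)
      simp [nnnorm_eq_zero, ← norm_eq_zero.mp this, this]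
    refine iSup_le fun x => iSup_le fun R => iSup_le fun hR => ?_
    have : ∫⁻ y in Metric.ball x R, (‖f y‖₊ : ℝ≥0∞) ^ (2 : ℕ) = 0 := by
      rw [lintegral_congr_ae (ae_restrict_of_ae hae), lintegral_zero]
    rw [this, mul_zero, ENNReal.zero_rpow_of_pos (by norm_num)]
    exact zero_le
  · -- main case
    refine iSup_le fun x => iSup_le fun R => iSup_le fun hR => ?_
    have hmain := morrey_aux f hf M hMle hM0 hMt x R hR
    have hKC : K ≤ (ENNReal.ofReal C) ^ (2:ℕ) := by
      calc K = ENNReal.ofReal K.toReal := (ENNReal.ofReal_toReal hKt).symm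
        _ ≤ ENNReal.ofReal (C^2) := by
            apply ENNReal.ofReal_le_ofReal
            nlinarith [ENNReal.toReal_nonneg (a := K)]
        _ = (ENNReal.ofReal C) ^ (2:ℕ) := by
            rw [ENNReal.ofReal_pow (by linarith)]
    have hfinal : ENNReal.ofReal R⁻¹ *
        ∫⁻ y in Metric.ball x R, (‖f y‖₊ : ℝ≥0∞) ^ (2 : ℕ)
          ≤ (ENNReal.ofReal C * M) ^ (2:ℕ) := by
      calc _ ≤ K * M ^ (2:ℕ) := hmain
        _ ≤ (ENNReal.ofReal C) ^ (2:ℕ) * M ^ (2:ℕ) := by gcongr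
        _ = (ENNReal.ofReal C * M) ^ (2:ℕ) := (mul_pow _ _ _).symm
    calc (ENNReal.ofReal R⁻¹ *
        ∫⁻ y in Metric.ball x R, (‖f y‖₊ : ℝ≥0∞) ^ (2 : ℕ)) ^ (1/2 : ℝ)
        ≤ ((ENNReal.ofReal C * M) ^ (2:ℕ)) ^ (1/2 : ℝ) := by gcongr
      _ = ENNReal.ofReal C * M := by
          rw [← ENNReal.rpow_natCast (ENNReal.ofReal C * M) 2, ← ENNReal.rpow_mul]
          norm_num
end

section
/- A profile satisfying the scaled-annulus nondegeneracy condition cannot belong to L^{3,q} for finite q: let λ > 1, 1 ≤ q < ∞, and let f : ℝ³ → ℝ³ be measurable with (3 ∫_0^∞ α^q · μ({x ∈ ℝ³ : |f(x)| > α})^{q/3} dα/α)^{1/q} < ∞. Then liminf_{n→∞} ∫_{B(0,1) \ B(0,λ^{-1})} |λⁿ f(λⁿ x)| dx = 0; equivalently, if liminf_{n→∞} ∫_{B(0,1) \ B(0,λ^{-1})} |λⁿ f(λⁿ x)| dx > 0 then ‖f‖_{L^{3,q}(ℝ³)} = ∞. -/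
open MeasureTheory ENNReal Filter

lemma L3q_key_alg {e v K L q : ℝ} (he : 0 < e) (hv : 0 < v) (hK : 0 < K) (hL : 0 < L)
    (hq : 0 < q) :
    (e * L/(4*v)/2)^q * (e/(2*K)/L^3)^(q/3:ℝ) * (e*L/(4*v))⁻¹ * (e*L/(4*v)/2)
      = (e/(8*v))^q * (e/(2*K))^(q/3:ℝ) / 2 := by
  have h1 : e * L/(4*v)/2 = (e/(8*v)) * L := by ring
  have h2 : e/(2*K)/L^3 = (e/(2*K)) * (L^3)⁻¹ := by ring
  rw [h1, h2, Real.mul_rpow (by positivity) hL.le,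
    Real.mul_rpow (by positivity) (by positivity)]
  have h3 : ((L^3)⁻¹ : ℝ) ^ (q/3:ℝ) = L ^ (-q : ℝ) := by
    rw [← Real.rpow_natCast L 3, ← Real.rpow_neg hL.le, ← Real.rpow_mul hL.le]
    congr 1
    push_cast
    ring
  rw [h3]
  have h4 : L ^ q * L ^ (-q:ℝ) = 1 := by
    rw [← Real.rpow_add hL]; simp
  have hne : e*L/(4*v) ≠ 0 := by positivity
  have h5 : (e*L/(4*v))⁻¹ * (e/(8*v)*L) = 1/2 := by
    have h6 : e/(8*v)*L = (e*L/(4*v))/2 := by ring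
    rw [h6, show (e*L/(4*v))⁻¹ * ((e*L/(4*v))/2) = ((e*L/(4*v))⁻¹ * (e*L/(4*v)))/2 by ring,
      inv_mul_cancel₀ hne]
  calc (e/(8*v))^q * L^q * ((e/(2*K))^(q/3:ℝ) * L^(-q:ℝ)) * (e*L/(4*v))⁻¹ * (e/(8*v)*L)
      = ((e/(8*v))^q * (e/(2*K))^(q/3:ℝ)) * (L^q * L^(-q:ℝ))
          * ((e*L/(4*v))⁻¹ * (e/(8*v)*L)) := by ring
    _ = (e/(8*v))^q * (e/(2*K))^(q/3:ℝ) / 2 := by rw [h4, h5]; ring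

set_option maxHeartbeats 2000000 in
/-- A profile in `L^{3,q}(ℝ³)` (`1 ≤ q < ∞`) cannot satisfy the scaled-annulus
nondegeneracy condition: if the Lorentz quasinorm of `f` is finite, then
`liminf_{n→∞} ∫_{B(0,1) \ B(0,λ⁻¹)} |λⁿ f(λⁿ x)| dx = 0`. -/
theorem L3q_profile_liminf_zero
    (lam : ℝ) (hlam : 1 < lam) (q : ℝ) (hq : 1 ≤ q)
    (f : EuclideanSpace ℝ (Fin 3) → EuclideanSpace ℝ (Fin 3)) (hf : Measurable f)
    (hfin : ((3 : ℝ≥0∞) * ∫⁻ α in Set.Ioi (0:ℝ),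
        ENNReal.ofReal (α ^ q) *
          (volume {x : EuclideanSpace ℝ (Fin 3) | α < ‖f x‖}) ^ (q/3 : ℝ) *
          ENNReal.ofReal α⁻¹) ^ (1/q) < ⊤) :
    Filter.liminf (fun n : ℕ =>
        ∫⁻ x in Metric.ball (0 : EuclideanSpace ℝ (Fin 3)) 1 \ Metric.ball 0 lam⁻¹,
          (‖(lam ^ n : ℝ) • f ((lam ^ n : ℝ) • x)‖₊ : ℝ≥0∞)) atTop = 0 := by
  classical
  by_contra hne
  have hq0 : (0:ℝ) < q := lt_of_lt_of_le one_pos hq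
  have hlam0 : (0:ℝ) < lam := lt_trans one_pos hlam
  set A : Set (EuclideanSpace ℝ (Fin 3)) :=
    Metric.ball (0 : EuclideanSpace ℝ (Fin 3)) 1 \ Metric.ball 0 lam⁻¹ with hAdef
  set D : ℝ → ℝ≥0∞ := fun α => volume {x : EuclideanSpace ℝ (Fin 3) | α < ‖f x‖} with hDdef
  have hDanti : Antitone D := fun a b hab => measure_mono fun x hx => lt_of_le_of_lt hab hx
  have hDmeas : Measurable D := hDanti.measurable
  set G : ℝ → ℝ≥0∞ :=
    fun t => ENNReal.ofReal (t ^ q) * D t ^ (q/3 : ℝ) * ENNReal.ofReal t⁻¹ with hGdef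
  have hGmeas : Measurable G := by unfold G; fun_prop
  set I : ℝ≥0∞ := ∫⁻ α in Set.Ioi (0:ℝ), G α with hIdef
  have hItop : I ≠ ⊤ := by
    have h3 : (3:ℝ≥0∞) * I < ⊤ :=
      (ENNReal.rpow_lt_top_iff_of_pos (by positivity : (0:ℝ) < 1/q)).mp hfin
    have hle : I ≤ 3 * I := le_mul_of_one_le_left zero_le (by norm_num)
    exact (lt_of_le_of_lt hle h3).ne
  -- pointwise bound on the distribution function
  have hDb : ∀ a : ℝ, 0 < a →
      ENNReal.ofReal ((a/2)^q) * D a ^ (q/3:ℝ) ≤ 2 * I := by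
    intro a ha
    have hsub : Set.Ioc (a/2) a ⊆ Set.Ioi (0:ℝ) := by
      intro t ht
      have := ht.1
      simp only [Set.mem_Ioi]
      linarith
    have h1 : (ENNReal.ofReal ((a/2)^q) * D a ^ (q/3:ℝ) * ENNReal.ofReal a⁻¹)
        * volume (Set.Ioc (a/2) a) ≤ I := by
      calc (ENNReal.ofReal ((a/2)^q) * D a ^ (q/3:ℝ) * ENNReal.ofReal a⁻¹)
            * volume (Set.Ioc (a/2) a)
          = ∫⁻ _ in Set.Ioc (a/2) a,
              (ENNReal.ofReal ((a/2)^q) * D a ^ (q/3:ℝ) * ENNReal.ofReal a⁻¹) :=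
            (setLIntegral_const _ _).symm
        _ ≤ ∫⁻ t in Set.Ioc (a/2) a, G t := by
            refine setLIntegral_mono hGmeas ?_
            intro t ht
            have ht0 : 0 < t := by have := ht.1; linarith
            refine mul_le_mul' (mul_le_mul' ?_ ?_) ?_
            · exact ENNReal.ofReal_le_ofReal
                (Real.rpow_le_rpow (by positivity) ht.1.le hq0.le)
            · exact ENNReal.rpow_le_rpow (hDanti ht.2) (by positivity)
            · exact ENNReal.ofReal_le_ofReal (inv_anti₀ ht0 ht.2)
        _ ≤ I := lintegral_mono_set hsub
    rw [Real.volume_Ioc, show a - a/2 = a/2 by ring] at h1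
    have h2 : ENNReal.ofReal a⁻¹ * ENNReal.ofReal (a/2) = ENNReal.ofReal (1/2) := by
      rw [← ENNReal.ofReal_mul (by positivity)]
      congr 1
      field_simp
    rw [mul_assoc, h2] at h1
    have h3 : ENNReal.ofReal (1/2 : ℝ) = (2:ℝ≥0∞)⁻¹ := by
      rw [show (1/2 : ℝ) = (2:ℝ)⁻¹ by norm_num, ENNReal.ofReal_inv_of_pos two_pos]
      norm_num
    rw [h3] at h1
    calc ENNReal.ofReal ((a/2)^q) * D a ^ (q/3:ℝ)
        = ENNReal.ofReal ((a/2)^q) * D a ^ (q/3:ℝ) * 2⁻¹ * 2 := by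
          rw [mul_assoc, ENNReal.inv_mul_cancel (by norm_num) (by norm_num), mul_one]
      _ ≤ I * 2 := mul_le_mul_left h1 2
      _ = 2 * I := mul_comm _ _
  set C3 : ℝ≥0∞ := ((2:ℝ≥0∞) * I) ^ (3/q : ℝ) with hC3def
  have hC3top : C3 ≠ ⊤ := by
    refine (ENNReal.rpow_lt_top_of_nonneg (by positivity) ?_).ne
    exact ENNReal.mul_ne_top (by norm_num) hItop
  set c3 : ℝ := C3.toReal with hc3def
  have hc3 : 0 ≤ c3 := ENNReal.toReal_nonneg
  have hDb2 : ∀ a : ℝ, 0 < a → D a ≤ ENNReal.ofReal (8 * c3 * a^(-3:ℝ)) := by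
    intro a ha
    have ha2 : (0:ℝ) < a/2 := by linarith
    have h2 := ENNReal.rpow_le_rpow (hDb a ha) (by positivity : (0:ℝ) ≤ 3/q)
    rw [ENNReal.mul_rpow_of_nonneg _ _ (by positivity),
      ENNReal.ofReal_rpow_of_nonneg (by positivity) (by positivity),
      ← Real.rpow_mul ha2.le, show q*(3/q) = (3:ℝ) by field_simp,
      ← ENNReal.rpow_mul, show (q/3)*(3/q) = (1:ℝ) by field_simp,
      ENNReal.rpow_one] at h2
    -- h2 : ofReal ((a/2)^(3:ℝ)) * D a ≤ C3
    have hP0 : ENNReal.ofReal ((a/2)^(3:ℝ)) ≠ 0 :=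
      (ENNReal.ofReal_pos.mpr (Real.rpow_pos_of_pos ha2 _)).ne'
    have hDa : D a ≤ (ENNReal.ofReal ((a/2)^(3:ℝ)))⁻¹ * C3 := by
      have := mul_le_mul_right h2 (ENNReal.ofReal ((a/2)^(3:ℝ)))⁻¹
      rwa [← mul_assoc, ENNReal.inv_mul_cancel hP0 ENNReal.ofReal_ne_top, one_mul] at this
    refine hDa.trans_eq ?_
    rw [← ENNReal.ofReal_inv_of_pos (Real.rpow_pos_of_pos ha2 _),
      ← ENNReal.ofReal_toReal hC3top, ← hc3def,
      ← ENNReal.ofReal_mul (by positivity)]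
    congr 1
    rw [show (3:ℝ) = ((3:ℕ):ℝ) by norm_num, Real.rpow_natCast,
      Real.rpow_neg ha.le, Real.rpow_natCast]
    have hcube : ((a/2):ℝ)^(3:ℕ) = a^(3:ℕ)/8 := by ring
    rw [hcube, inv_div]
    ring
  -- tail bound
  have htail : ∀ u : ℝ, 0 < u →
      (∫⁻ t in Set.Ioi u, D t) ≤ ENNReal.ofReal (4 * c3 * u^(-2:ℝ)) := by
    intro u hu
    have hle : (∫⁻ t in Set.Ioi u, D t)
        ≤ ∫⁻ t in Set.Ioi u, ENNReal.ofReal (8*c3*t^(-3:ℝ)) :=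
      setLIntegral_mono (by fun_prop) (fun t ht => hDb2 t (hu.trans ht))
    have hint : IntegrableOn (fun t : ℝ => 8*c3*t^(-3:ℝ)) (Set.Ioi u) :=
      (integrableOn_Ioi_rpow_of_lt (by norm_num) hu).const_mul _
    have hnn : 0 ≤ᵐ[volume.restrict (Set.Ioi u)] fun t : ℝ => 8*c3*t^(-3:ℝ) := by
      filter_upwards [ae_restrict_mem measurableSet_Ioi] with t ht
      have ht0 : 0 < t := hu.trans ht
      positivity
    rw [← MeasureTheory.ofReal_integral_eq_lintegral_ofReal hint hnn] at hle
    refine hle.trans (ENNReal.ofReal_le_ofReal ?_)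
    rw [MeasureTheory.integral_const_mul, integral_Ioi_rpow_of_lt (by norm_num) hu,
      show (-3:ℝ)+1 = -2 by norm_num]
    ring_nf
    exact le_refl _
  -- extract a positive eventual lower bound from the liminf
  have hpos : 0 < Filter.liminf (fun n : ℕ =>
      ∫⁻ x in A, (‖(lam ^ n : ℝ) • f ((lam ^ n : ℝ) • x)‖₊ : ℝ≥0∞)) atTop :=
    pos_iff_ne_zero.mpr hne
  obtain ⟨ε, hε0, hεlt⟩ := exists_between hpos
  have hev := Filter.eventually_lt_of_lt_liminf hεlt
  obtain ⟨n₀, hn₀⟩ := Filter.eventually_atTop.mp hev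
  have hεtop : ε ≠ ⊤ := (hεlt.trans_le le_top).ne
  set e : ℝ := ε.toReal with hedef
  have he0 : 0 < e := ENNReal.toReal_pos hε0.ne' hεtop
  set v : ℝ := (volume (Metric.ball (0 : EuclideanSpace ℝ (Fin 3)) 1)).toReal with hvdef
  have hv0 : 0 < v := ENNReal.toReal_pos
    (Metric.measure_ball_pos volume _ one_pos).ne' measure_ball_lt_top.ne
  set K : ℝ := Real.sqrt (16*c3/e) + e/(4*v) + 1 with hKdef
  have hsqnn : 0 ≤ Real.sqrt (16*c3/e) := Real.sqrt_nonneg _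
  have hev4 : 0 ≤ e/(4*v) := by positivity
  have hK0 : 0 < K := by positivity
  have hKe : e/(4*v) < K := by nlinarith
  have hK2 : 16*c3/e ≤ K^2 := by
    nlinarith [Real.sq_sqrt (show 0 ≤ 16*c3/e by positivity)]
  set δ : ℝ := (e/(8*v))^q * (e/(2*K))^(q/3:ℝ) / 2 with hδdef
  have hδ0 : 0 < δ := by
    have h1 := Real.rpow_pos_of_pos (show 0 < e/(8*v) by positivity) q
    have h2 := Real.rpow_pos_of_pos (show 0 < e/(2*K) by positivity) (q/3)
    positivity
  -- key estimate for each n ≥ n₀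
  have key : ∀ n : ℕ, n₀ ≤ n →
      ENNReal.ofReal δ ≤
        ∫⁻ t in Set.Ioc (e * (lam^n)⁻¹/(4*v)/2) (e * (lam^n)⁻¹/(4*v)), G t := by
    intro n hn
    set c : ℝ := lam^n with hcdef
    have hc0 : 0 < c := pow_pos hlam0 n
    set L : ℝ := c⁻¹ with hLdef
    have hL0 : 0 < L := inv_pos.mpr hc0
    set s : ℝ := e * L/(4*v) with hsdef
    have hs0 : 0 < s := by positivity
    set u : ℝ := L * K with hudef
    have hu0 : 0 < u := mul_pos hL0 hK0
    have hsu : s < u := by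
      have : s = L * (e/(4*v)) := by rw [hsdef]; ring
      rw [this, hudef]
      exact mul_lt_mul_of_pos_left hKe hL0
    set m : ℝ → ℝ≥0∞ :=
      fun t => (volume.restrict A) {x : EuclideanSpace ℝ (Fin 3) | t < ‖f (c • x)‖} with hmdef
    have hsmul : Measurable fun x : EuclideanSpace ℝ (Fin 3) => c • x :=
      (continuous_const_smul c).measurable
    have hfc : Measurable fun x : EuclideanSpace ℝ (Fin 3) => ‖f (c • x)‖ :=
      (hf.comp hsmul).norm
    have hSt : ∀ t : ℝ, MeasurableSet {x : EuclideanSpace ℝ (Fin 3) | t < ‖f (c • x)‖} :=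
      fun t => measurableSet_lt measurable_const hfc
    have hmanti : Antitone m := fun t₁ t₂ h => measure_mono fun x hx => lt_of_le_of_lt h hx
    have hmmeas : Measurable m := hmanti.measurable
    have hb : (∫⁻ x in A, ENNReal.ofReal ‖f (c • x)‖) = ∫⁻ t in Set.Ioi (0:ℝ), m t :=
      lintegral_eq_lintegral_meas_lt (volume.restrict A)
        (Filter.Eventually.of_forall fun x => norm_nonneg _) hfc.aemeasurable
    have han : (∫⁻ x in A, (‖(c:ℝ) • f (c • x)‖₊ : ℝ≥0∞))
        = ENNReal.ofReal c * ∫⁻ t in Set.Ioi (0:ℝ), m t := by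
      rw [← hb, ← lintegral_const_mul _ hfc.ennreal_ofReal]
      refine lintegral_congr fun x => ?_
      rw [nnnorm_smul, ENNReal.coe_mul, ← enorm_eq_nnnorm c, Real.enorm_eq_ofReal hc0.le,
        ofReal_norm, enorm_eq_nnnorm]
    have hεn := hn₀ n hn
    have hbl : ENNReal.ofReal (e * L) ≤ ∫⁻ t in Set.Ioi (0:ℝ), m t := by
      have h1 : ε ≤ ENNReal.ofReal c * ∫⁻ t in Set.Ioi (0:ℝ), m t := by
        rw [← han]; exact hεn.le
      calc ENNReal.ofReal (e * L) = ENNReal.ofReal L * ε := by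
            rw [ENNReal.ofReal_mul he0.le, hedef, ENNReal.ofReal_toReal hεtop]
            ring
        _ ≤ ENNReal.ofReal L * (ENNReal.ofReal c * ∫⁻ t in Set.Ioi (0:ℝ), m t) :=
            mul_le_mul_right h1 _
        _ = (ENNReal.ofReal L * ENNReal.ofReal c) * ∫⁻ t in Set.Ioi (0:ℝ), m t :=
            (mul_assoc _ _ _).symm
        _ = ∫⁻ t in Set.Ioi (0:ℝ), m t := by
            rw [← ENNReal.ofReal_mul hL0.le, hLdef, inv_mul_cancel₀ hc0.ne',
              ENNReal.ofReal_one, one_mul]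
    have hmv : ∀ t : ℝ, m t ≤ ENNReal.ofReal v := by
      intro t
      rw [hmdef]
      simp only []
      rw [Measure.restrict_apply (hSt t)]
      refine (measure_mono ((Set.inter_subset_right).trans Set.diff_subset)).trans ?_
      rw [hvdef, ENNReal.ofReal_toReal measure_ball_lt_top.ne]
    have hmD : ∀ t : ℝ, m t ≤ ENNReal.ofReal (L^3) * D t := by
      intro t
      have h1 : m t ≤ volume {x : EuclideanSpace ℝ (Fin 3) | t < ‖f (c • x)‖} := by
        rw [hmdef]
        simp only []
        rw [Measure.restrict_apply (hSt t)]
        exact measure_mono Set.inter_subset_left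
      have h2 : {x : EuclideanSpace ℝ (Fin 3) | t < ‖f (c • x)‖}
          = (c • ·) ⁻¹' {y : EuclideanSpace ℝ (Fin 3) | t < ‖f y‖} := rfl
      rw [h2, MeasureTheory.Measure.addHaar_preimage_smul volume hc0.ne'] at h1
      refine h1.trans_eq ?_
      congr 1
      rw [finrank_euclideanSpace_fin]
      rw [abs_of_pos (by positivity), hLdef, inv_pow]
    have hp1 : (∫⁻ t in Set.Ioc (0:ℝ) s, m t) ≤ ENNReal.ofReal (e*L/4) := by
      calc (∫⁻ t in Set.Ioc (0:ℝ) s, m t)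
          ≤ ∫⁻ _ in Set.Ioc (0:ℝ) s, ENNReal.ofReal v :=
            setLIntegral_mono measurable_const (fun t _ => hmv t)
        _ = ENNReal.ofReal v * volume (Set.Ioc (0:ℝ) s) := setLIntegral_const _ _
        _ = ENNReal.ofReal (v * s) := by
            rw [Real.volume_Ioc, sub_zero, ← ENNReal.ofReal_mul hv0.le]
        _ = ENNReal.ofReal (e*L/4) := by
            congr 1
            rw [hsdef]
            field_simp
    have hp3 : (∫⁻ t in Set.Ioi u, m t) ≤ ENNReal.ofReal (e*L/4) := by
      have h16 : 16*c3 ≤ K^2 * e := (div_le_iff₀ he0).mp hK2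
      calc (∫⁻ t in Set.Ioi u, m t)
          ≤ ∫⁻ t in Set.Ioi u, ENNReal.ofReal (L^3) * D t :=
            setLIntegral_mono (by fun_prop) (fun t _ => hmD t)
        _ = ENNReal.ofReal (L^3) * ∫⁻ t in Set.Ioi u, D t := lintegral_const_mul _ hDmeas
        _ ≤ ENNReal.ofReal (L^3) * ENNReal.ofReal (4*c3*u^(-2:ℝ)) :=
            mul_le_mul_right (htail u hu0) _
        _ = ENNReal.ofReal (L^3 * (4*c3*u^(-2:ℝ))) :=
            (ENNReal.ofReal_mul (by positivity)).symm
        _ ≤ ENNReal.ofReal (e*L/4) := by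
            refine ENNReal.ofReal_le_ofReal ?_
            rw [Real.rpow_neg hu0.le, Real.rpow_two, hudef]
            have hexp : L^3 * (4*c3*((L*K)^2)⁻¹) = 4*c3*L/K^2 := by
              field_simp
            rw [hexp, div_le_div_iff₀ (by positivity) (by norm_num)]
            nlinarith [mul_le_mul_of_nonneg_right h16 hL0.le]
    have hp2 : (∫⁻ t in Set.Ioc s u, m t) ≤ m s * ENNReal.ofReal u := by
      calc (∫⁻ t in Set.Ioc s u, m t)
          ≤ ∫⁻ _ in Set.Ioc s u, m s :=
            setLIntegral_mono measurable_const (fun t ht => hmanti ht.1.le)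
        _ = m s * volume (Set.Ioc s u) := setLIntegral_const _ _
        _ = m s * ENNReal.ofReal (u - s) := by rw [Real.volume_Ioc]
        _ ≤ m s * ENNReal.ofReal u :=
            mul_le_mul_right (ENNReal.ofReal_le_ofReal (by linarith)) _
    have hsplit : (∫⁻ t in Set.Ioi (0:ℝ), m t)
        ≤ ENNReal.ofReal (e*L/4) + (m s * ENNReal.ofReal u + ENNReal.ofReal (e*L/4)) := by
      have hset : Set.Ioi (0:ℝ) = Set.Ioc (0:ℝ) s ∪ (Set.Ioc s u ∪ Set.Ioi u) := by
        rw [Set.Ioc_union_Ioi_eq_Ioi hsu.le, Set.Ioc_union_Ioi_eq_Ioi hs0.le]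
      calc (∫⁻ t in Set.Ioi (0:ℝ), m t)
          = ∫⁻ t in Set.Ioc (0:ℝ) s ∪ (Set.Ioc s u ∪ Set.Ioi u), m t := by rw [← hset]
        _ ≤ (∫⁻ t in Set.Ioc (0:ℝ) s, m t) + ∫⁻ t in Set.Ioc s u ∪ Set.Ioi u, m t :=
            lintegral_union_le _ _ _
        _ ≤ (∫⁻ t in Set.Ioc (0:ℝ) s, m t)
              + ((∫⁻ t in Set.Ioc s u, m t) + ∫⁻ t in Set.Ioi u, m t) :=
            add_le_add_right (lintegral_union_le _ _ _) _
        _ ≤ ENNReal.ofReal (e*L/4) + (m s * ENNReal.ofReal u + ENNReal.ofReal (e*L/4)) :=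
            add_le_add hp1 (add_le_add hp2 hp3)
    have hms : ENNReal.ofReal (e*L/2) ≤ m s * ENNReal.ofReal u := by
      have h1 : ENNReal.ofReal (e*L/2) + ENNReal.ofReal (e*L/2)
          ≤ ENNReal.ofReal (e*L/2) + m s * ENNReal.ofReal u := by
        calc ENNReal.ofReal (e*L/2) + ENNReal.ofReal (e*L/2)
            = ENNReal.ofReal (e*L) := by
              rw [← ENNReal.ofReal_add (by positivity) (by positivity)]
              congr 1
              ring
          _ ≤ ∫⁻ t in Set.Ioi (0:ℝ), m t := hbl
          _ ≤ ENNReal.ofReal (e*L/4) + (m s * ENNReal.ofReal u + ENNReal.ofReal (e*L/4)) :=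
              hsplit
          _ = ENNReal.ofReal (e*L/2) + m s * ENNReal.ofReal u := by
              rw [add_comm (m s * ENNReal.ofReal u) (ENNReal.ofReal (e*L/4)), ← add_assoc,
                ← ENNReal.ofReal_add (by positivity) (by positivity),
                show e*L/4 + e*L/4 = e*L/2 by ring]
      exact (ENNReal.add_le_add_iff_left ENNReal.ofReal_ne_top).mp h1
    have hms2 : ENNReal.ofReal (e/(2*K)) ≤ m s := by
      have hu_ne : ENNReal.ofReal u ≠ 0 := (ENNReal.ofReal_pos.mpr hu0).ne'
      rw [← ENNReal.mul_le_mul_iff_left hu_ne ENNReal.ofReal_ne_top]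
      calc ENNReal.ofReal (e/(2*K)) * ENNReal.ofReal u
          = ENNReal.ofReal (e/(2*K) * u) := (ENNReal.ofReal_mul (by positivity)).symm
        _ = ENNReal.ofReal (e*L/2) := by
            congr 1
            rw [hudef]
            field_simp [hK0.ne']
        _ ≤ m s * ENNReal.ofReal u := hms
    have hDs : ENNReal.ofReal (e/(2*K)/L^3) ≤ D s := by
      have hP0 : ENNReal.ofReal (L^3) ≠ 0 := (ENNReal.ofReal_pos.mpr (by positivity)).ne'
      rw [← ENNReal.mul_le_mul_iff_right hP0 ENNReal.ofReal_ne_top]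
      calc ENNReal.ofReal (L^3) * ENNReal.ofReal (e/(2*K)/L^3)
          = ENNReal.ofReal (e/(2*K)) := by
            rw [← ENNReal.ofReal_mul (by positivity)]
            congr 1
            rw [mul_comm, div_mul_cancel₀ _ (by positivity : (L:ℝ)^3 ≠ 0)]
        _ ≤ m s := hms2
        _ ≤ ENNReal.ofReal (L^3) * D s := hmD s
    -- final lower bound on the contribution of `Ioc (s/2) s`
    have hlow : (ENNReal.ofReal ((s/2)^q)
          * ENNReal.ofReal (e/(2*K)/L^3) ^ (q/3:ℝ) * ENNReal.ofReal s⁻¹)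
          * volume (Set.Ioc (s/2) s) ≤ ∫⁻ t in Set.Ioc (s/2) s, G t := by
      rw [← setLIntegral_const]
      refine setLIntegral_mono hGmeas ?_
      intro t ht
      have ht0 : 0 < t := lt_trans (half_pos hs0) ht.1
      refine mul_le_mul' (mul_le_mul' ?_ ?_) ?_
      · exact ENNReal.ofReal_le_ofReal (Real.rpow_le_rpow (by positivity) ht.1.le hq0.le)
      · exact ENNReal.rpow_le_rpow (hDs.trans (hDanti ht.2)) (by positivity)
      · exact ENNReal.ofReal_le_ofReal (inv_anti₀ ht0 ht.2)
    refine le_trans ?_ hlow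
    rw [Real.volume_Ioc, show s - s/2 = s/2 by ring,
      ENNReal.ofReal_rpow_of_nonneg (by positivity) (by positivity),
      ← ENNReal.ofReal_mul (by positivity), ← ENNReal.ofReal_mul (by positivity),
      ← ENNReal.ofReal_mul (by positivity)]
    refine ENNReal.ofReal_le_ofReal ?_
    rw [hδdef]
    rw [show ((s/2)^q * (e/(2*K)/L^3)^(q/3:ℝ) * s⁻¹ * (s/2))
        = (e * L/(4*v)/2)^q * (e/(2*K)/L^3)^(q/3:ℝ) * (e*L/(4*v))⁻¹ * (e*L/(4*v)/2) by
      rw [hsdef]]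
    rw [L3q_key_alg he0 hv0 hK0 hL0 hq0]
  -- assemble: infinitely many disjoint intervals each contributing `δ`
  obtain ⟨k, hk⟩ := pow_unbounded_of_one_lt (2:ℝ) hlam
  set σ : ℕ → ℝ := fun j => e * (lam^(n₀ + j*k))⁻¹/(4*v) with hσdef
  have hσ0 : ∀ j, 0 < σ j := by
    intro j
    have : (0:ℝ) < lam ^ (n₀ + j*k) := pow_pos hlam0 _
    positivity
  have hhalf : ∀ i j, i < j → σ j ≤ σ i / 2 := by
    intro i j hij
    have hpow : 2 * lam ^ (n₀ + i*k) ≤ lam ^ (n₀ + j*k) := by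
      have h1 : n₀ + i*k + k ≤ n₀ + j*k := by
        have : i + 1 ≤ j := hij
        nlinarith [this]
      calc 2 * lam ^ (n₀ + i*k) ≤ lam^k * lam ^ (n₀ + i*k) := by
            have h2k : (2:ℝ) ≤ lam^k := hk.le
            nlinarith [pow_pos hlam0 (n₀ + i*k)]
        _ = lam ^ (n₀ + i*k + k) := by rw [pow_add]; ring
        _ ≤ lam ^ (n₀ + j*k) := pow_le_pow_right₀ hlam.le h1
    have hpi : (0:ℝ) < lam ^ (n₀ + i*k) := pow_pos hlam0 _
    have hpj : (0:ℝ) < lam ^ (n₀ + j*k) := pow_pos hlam0 _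
    have h1 : (lam ^ (n₀ + j*k))⁻¹ ≤ (2 * lam ^ (n₀ + i*k))⁻¹ :=
      inv_anti₀ (by positivity) hpow
    show e * (lam ^ (n₀ + j*k))⁻¹/(4*v) ≤ e * (lam ^ (n₀ + i*k))⁻¹/(4*v) / 2
    have h2 : e * (2 * lam ^ (n₀ + i*k))⁻¹/(4*v) = e * (lam ^ (n₀ + i*k))⁻¹/(4*v)/2 := by
      rw [mul_inv]
      ring
    calc e * (lam ^ (n₀ + j*k))⁻¹/(4*v)
        ≤ e * (2 * lam ^ (n₀ + i*k))⁻¹/(4*v) := by gcongr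
      _ = e * (lam ^ (n₀ + i*k))⁻¹/(4*v)/2 := h2
  set T : ℕ → Set ℝ := fun j => Set.Ioc (σ j / 2) (σ j) with hTdef
  have hTm : ∀ j, MeasurableSet (T j) := fun j => measurableSet_Ioc
  have hd : ∀ i j, i < j → Disjoint (T i) (T j) := by
    intro i j hij
    refine Set.Ioc_disjoint_Ioc.mpr ?_
    calc min (σ i) (σ j) ≤ σ j := min_le_right _ _
      _ ≤ σ i / 2 := hhalf i j hij
      _ ≤ max (σ i / 2) (σ j / 2) := le_max_left _ _
  have hTd : Pairwise (Function.onFun Disjoint T) := by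
    intro i j hij
    rcases lt_or_gt_of_ne hij with h | h
    · exact hd i j h
    · exact (hd j i h).symm
  have hTsub : (⋃ j, T j) ⊆ Set.Ioi (0:ℝ) := by
    intro t ht
    simp only [Set.mem_iUnion] at ht
    obtain ⟨j, hj⟩ := ht
    exact lt_trans (half_pos (hσ0 j)) hj.1
  have htop : (⊤:ℝ≥0∞) ≤ I := by
    calc (⊤:ℝ≥0∞) = ∑' (_ : ℕ), ENNReal.ofReal δ :=
          (ENNReal.tsum_const_eq_top_of_ne_zero (ENNReal.ofReal_pos.mpr hδ0).ne').symm
      _ ≤ ∑' j, ∫⁻ t in T j, G t :=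
          ENNReal.tsum_le_tsum fun j => key (n₀ + j*k) (Nat.le_add_right _ _)
      _ = ∫⁻ t in ⋃ j, T j, G t := (lintegral_iUnion hTm hTd G).symm
      _ ≤ I := lintegral_mono_set hTsub
  exact hItop (top_le_iff.mp htop)
end
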